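/- The expected cost C_exp has a unique global minimizer over ℝ × [0,∞): if (X₁,Y₁) and (X₂,Y₂) both minimize C_exp over ℝ × [0,∞), then X₁ = X₂ and Y₁ = Y₂. -/

import Mathlib

open Real MeasureTheory Filter Topology

/-!
A minimizer has `Y > 0`: at `Y = 0` the right derivative in `Y` of the expected cost is `-c < 0`,
since `Y ↦ a √(b (X - x)² + Y²)` has derivative `0` at `Y = 0` for every `x ≠ X`, and `{X}` is null.
The point cost is a weighted Euclidean norm of `(X - x, Y)` minus a linear term, hence convex, and
the triangle inequality for `(√b (X₁ - x), Y₁)` and `(√b (X₂ - x), Y₂)` is strict unless the two vectors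
are parallel, which for distinct points with `Y₁ ≠ 0` happens for at most one `x`. So the midpoint
of two distinct minimizers would have strictly smaller expected cost.
-/

section Elementary

variable {b p q r s : ℝ}

lemma sqrt_add_sq_sub_sqrt {u : ℝ} (hu : 0 ≤ u) (Y : ℝ) :
    √(u + Y ^ 2) - √u = Y * (Y / (√(u + Y ^ 2) + √u)) := by
  have hA : 0 ≤ u + Y ^ 2 := by positivity
  rcases eq_or_ne (√(u + Y ^ 2) + √u) 0 with h | h
  · have h₁ : √(u + Y ^ 2) = 0 := by linarith [sqrt_nonneg (u + Y ^ 2), sqrt_nonneg u]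
    have h₂ : √u = 0 := by linarith [sqrt_nonneg (u + Y ^ 2), sqrt_nonneg u]
    simp [h₁, h₂]
  · rw [← mul_div_assoc, eq_div_iff h]
    linear_combination sq_sqrt hA - sq_sqrt hu

lemma abs_div_sqrt_add_sq_add_sqrt_le_one {u : ℝ} (hu : 0 ≤ u) (Y : ℝ) :
    |Y / (√(u + Y ^ 2) + √u)| ≤ 1 := by
  have hY : |Y| ≤ √(u + Y ^ 2) := by
    rw [← sqrt_sq_eq_abs]
    exact sqrt_le_sqrt (by linarith)
  rw [abs_div, abs_of_nonneg (add_nonneg (sqrt_nonneg _) (sqrt_nonneg _))]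
  exact div_le_one_of_le₀ (by linarith [sqrt_nonneg u]) (by positivity)

lemma tendsto_div_sqrt_add_sq_add_sqrt {u : ℝ} (hu : 0 < u) :
    Tendsto (fun Y => Y / (√(u + Y ^ 2) + √u)) (𝓝 0) (𝓝 0) := by
  have hden : √(u + 0 ^ 2) + √u ≠ 0 := by positivity
  have : ContinuousAt (fun Y : ℝ => Y / (√(u + Y ^ 2) + √u)) 0 :=
    continuousAt_id.div (by fun_prop) hden
  simpa using this.tendsto

lemma mul_add_mul_le_sqrt_mul_sqrt (hb : 0 ≤ b) :
    b * p * r + q * s ≤ √(b * p ^ 2 + q ^ 2) * √(b * r ^ 2 + s ^ 2) := by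
  rw [← sqrt_mul (by positivity)]
  refine le_sqrt_of_sq_le ?_
  nlinarith [mul_nonneg hb (sq_nonneg (p * s - q * r))]

lemma mul_add_mul_lt_sqrt_mul_sqrt (hb : 0 < b) (h : p * s ≠ q * r) :
    b * p * r + q * s < √(b * p ^ 2 + q ^ 2) * √(b * r ^ 2 + s ^ 2) := by
  rw [← sqrt_mul (by positivity)]
  refine lt_sqrt_of_sq_lt ?_
  nlinarith [mul_pos hb (pow_pos (abs_pos.mpr (sub_ne_zero.mpr h)) 2), sq_abs (p * s - q * r)]

lemma sq_two_mul_sqrt_midpoint (hb : 0 ≤ b) :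
    (2 * √(b * ((p + r) / 2) ^ 2 + ((q + s) / 2) ^ 2)) ^ 2 =
      (√(b * p ^ 2 + q ^ 2) + √(b * r ^ 2 + s ^ 2)) ^ 2 -
        2 * (√(b * p ^ 2 + q ^ 2) * √(b * r ^ 2 + s ^ 2) - (b * p * r + q * s)) := by
  rw [mul_pow, sq_sqrt (by positivity), add_sq, sq_sqrt (by positivity), sq_sqrt (by positivity)]
  ring

lemma two_mul_sqrt_midpoint_le (hb : 0 ≤ b) :
    2 * √(b * ((p + r) / 2) ^ 2 + ((q + s) / 2) ^ 2) ≤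
      √(b * p ^ 2 + q ^ 2) + √(b * r ^ 2 + s ^ 2) := by
  refine (pow_le_pow_iff_left₀ (by positivity) (by positivity) two_ne_zero).mp ?_
  rw [sq_two_mul_sqrt_midpoint hb]
  linarith [mul_add_mul_le_sqrt_mul_sqrt (p := p) (q := q) (r := r) (s := s) hb]

lemma two_mul_sqrt_midpoint_lt (hb : 0 < b) (h : p * s ≠ q * r) :
    2 * √(b * ((p + r) / 2) ^ 2 + ((q + s) / 2) ^ 2) <
      √(b * p ^ 2 + q ^ 2) + √(b * r ^ 2 + s ^ 2) := by
  refine (pow_lt_pow_iff_left₀ (by positivity) (by positivity) two_ne_zero).mp ?_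
  rw [sq_two_mul_sqrt_midpoint hb.le]
  linarith [mul_add_mul_lt_sqrt_mul_sqrt hb h]

end Elementary

noncomputable def pointCost (a b c X Y x : ℝ) : ℝ := a * √(b * (X - x) ^ 2 + Y ^ 2) - c * Y

noncomputable def expectedCost (a b c : ℝ) (μ : Measure ℝ) (X Y : ℝ) : ℝ :=
  ∫ x, pointCost a b c X Y x ∂μ

section ExpectedCost

variable {a b c : ℝ} {μ : Measure ℝ}

lemma continuous_pointCost (a b c X Y : ℝ) : Continuous (pointCost a b c X Y) := by
  unfold pointCost; fun_prop

lemma sqrt_mul_sq_add_sq_le (hb : 0 ≤ b) (X Y x : ℝ) :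
    √(b * (X - x) ^ 2 + Y ^ 2) ≤ √b * (|X| + |x|) + |Y| := by
  refine sqrt_le_iff.mpr ⟨by positivity, ?_⟩
  have hXx : |X - x| ≤ |X| + |x| := abs_sub _ _
  have h : b * (X - x) ^ 2 ≤ (√b * (|X| + |x|)) ^ 2 := by
    rw [mul_pow, sq_sqrt hb, ← sq_abs (X - x)]
    gcongr
  have hY : 0 ≤ √b * (|X| + |x|) * |Y| := by positivity
  nlinarith [sq_abs Y]

lemma integrable_pointCost [IsFiniteMeasure μ] (hb : 0 ≤ b) (hμ : Integrable (fun x => x) μ)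
    (X Y : ℝ) : Integrable (pointCost a b c X Y) μ := by
  refine Integrable.mono' (g := fun x => |a| * √b * |x| + (|a| * (√b * |X| + |Y|) + |c| * |Y|))
    ((hμ.abs.const_mul _).add (integrable_const _))
    (continuous_pointCost a b c X Y).aestronglyMeasurable (ae_of_all _ fun x => ?_)
  have h := mul_le_mul_of_nonneg_left (sqrt_mul_sq_add_sq_le hb X Y x) (abs_nonneg a)
  calc ‖pointCost a b c X Y x‖ ≤ |a| * √(b * (X - x) ^ 2 + Y ^ 2) + |c| * |Y| := by
        have := abs_sub (a * √(b * (X - x) ^ 2 + Y ^ 2)) (c * Y)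
        rwa [abs_mul, abs_mul, abs_of_nonneg (sqrt_nonneg _)] at this
    _ ≤ _ := by linarith

lemma expectedCost_sub_expectedCost_zero [IsProbabilityMeasure μ] (hb : 0 ≤ b)
    (hμ : Integrable (fun x => x) μ) (X Y : ℝ) :
    expectedCost a b c μ X Y - expectedCost a b c μ X 0 =
      Y * (a * ∫ x, Y / (√(b * (X - x) ^ 2 + Y ^ 2) + √(b * (X - x) ^ 2)) ∂μ - c) := by
  set ρ : ℝ → ℝ := fun x => Y / (√(b * (X - x) ^ 2 + Y ^ 2) + √(b * (X - x) ^ 2))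
  have hρ : Integrable ρ μ := Integrable.of_bound (by fun_prop) 1 (ae_of_all _ fun x =>
    abs_div_sqrt_add_sq_add_sqrt_le_one (by positivity) Y)
  have hpt : ∀ x, pointCost a b c X Y x - pointCost a b c X 0 x = Y * a * ρ x - Y * c := by
    intro x
    have h := sqrt_add_sq_sub_sqrt (u := b * (X - x) ^ 2) (by positivity) Y
    simp only [pointCost, ρ, ne_eq, OfNat.ofNat_ne_zero, not_false_eq_true, zero_pow, add_zero,
      mul_zero, sub_zero]
    linear_combination a * h
  unfold expectedCost
  rw [← integral_sub (integrable_pointCost hb hμ X Y) (integrable_pointCost hb hμ X 0)]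
  simp_rw [hpt]
  rw [integral_sub ((hρ.const_mul _)) (integrable_const _), integral_const_mul]
  simp only [probReal_univ, integral_const, smul_eq_mul, one_mul]
  ring

lemma tendsto_integral_div_sqrt_add_sq_add_sqrt [IsFiniteMeasure μ] [NullSingletonClass μ]
    (hb : 0 < b) (X : ℝ) :
    Tendsto (fun Y => ∫ x, Y / (√(b * (X - x) ^ 2 + Y ^ 2) + √(b * (X - x) ^ 2)) ∂μ)
      (𝓝 0) (𝓝 0) := by
  have h := tendsto_integral_filter_of_dominated_convergence (μ := μ) (l := 𝓝 (0 : ℝ))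
    (F := fun Y x => Y / (√(b * (X - x) ^ 2 + Y ^ 2) + √(b * (X - x) ^ 2))) (fun _ => 1)
    (Eventually.of_forall fun _ => (by fun_prop : Measurable _).aestronglyMeasurable)
    (Eventually.of_forall fun Y => ae_of_all _ fun x =>
      abs_div_sqrt_add_sq_add_sqrt_le_one (by positivity) Y)
    (integrable_const 1) (f := 0) ?_
  · simpa using h
  filter_upwards [μ.ae_ne X] with x hx
  exact tendsto_div_sqrt_add_sq_add_sqrt (by have := sub_ne_zero.mpr hx.symm; positivity)

lemma exists_pos_expectedCost_lt_expectedCost_zero [IsProbabilityMeasure μ]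
    [NullSingletonClass μ] (hb : 0 < b) (hc : 0 < c) (hμ : Integrable (fun x => x) μ) (X : ℝ) :
    ∃ Y > 0, expectedCost a b c μ X Y < expectedCost a b c μ X 0 := by
  have hlim := ((tendsto_integral_div_sqrt_add_sq_add_sqrt (μ := μ) hb X).const_mul a).sub_const c
  rw [mul_zero, zero_sub] at hlim
  obtain ⟨Y, hY, hneg⟩ := (eventually_mem_nhdsWithin.and
    (nhdsWithin_le_nhds (hlim.eventually_lt_const (neg_neg_of_pos hc)))).exists (f := 𝓝[>] 0)
  refine ⟨Y, hY, sub_neg.mp ?_⟩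
  rw [expectedCost_sub_expectedCost_zero hb.le hμ]
  exact mul_neg_of_pos_of_neg hY hneg

variable {X₁ Y₁ X₂ Y₂ : ℝ}

lemma pointCost_midpoint_le (ha : 0 ≤ a) (hb : 0 ≤ b) (x : ℝ) :
    pointCost a b c ((X₁ + X₂) / 2) ((Y₁ + Y₂) / 2) x ≤
      (pointCost a b c X₁ Y₁ x + pointCost a b c X₂ Y₂ x) / 2 := by
  have h := two_mul_sqrt_midpoint_le (p := X₁ - x) (r := X₂ - x) (q := Y₁) (s := Y₂) hb
  rw [show (X₁ - x + (X₂ - x)) / 2 = (X₁ + X₂) / 2 - x by ring] at h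
  unfold pointCost
  linarith [mul_le_mul_of_nonneg_left h ha]

lemma pointCost_midpoint_lt (ha : 0 < a) (hb : 0 < b) {x : ℝ}
    (hx : (X₁ - x) * Y₂ ≠ Y₁ * (X₂ - x)) :
    pointCost a b c ((X₁ + X₂) / 2) ((Y₁ + Y₂) / 2) x <
      (pointCost a b c X₁ Y₁ x + pointCost a b c X₂ Y₂ x) / 2 := by
  have h := two_mul_sqrt_midpoint_lt (p := X₁ - x) (r := X₂ - x) (q := Y₁) (s := Y₂) hb hx
  rw [show (X₁ - x + (X₂ - x)) / 2 = (X₁ + X₂) / 2 - x by ring] at h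
  unfold pointCost
  linarith [mul_lt_mul_of_pos_left h ha]

lemma expectedCost_midpoint_lt [IsProbabilityMeasure μ] [NullSingletonClass μ] (ha : 0 < a)
    (hb : 0 < b) (hμ : Integrable (fun x => x) μ) (hY₁ : Y₁ ≠ 0) (hne : (X₁, Y₁) ≠ (X₂, Y₂)) :
    expectedCost a b c μ ((X₁ + X₂) / 2) ((Y₁ + Y₂) / 2) <
      (expectedCost a b c μ X₁ Y₁ + expectedCost a b c μ X₂ Y₂) / 2 := by
  set g : ℝ → ℝ := fun x => (pointCost a b c X₁ Y₁ x + pointCost a b c X₂ Y₂ x) / 2 -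
    pointCost a b c ((X₁ + X₂) / 2) ((Y₁ + Y₂) / 2) x
  have hint := fun X Y => integrable_pointCost (a := a) (c := c) hb.le hμ X Y
  have hmean : Integrable (fun x => (pointCost a b c X₁ Y₁ x + pointCost a b c X₂ Y₂ x) / 2) μ :=
    ((hint X₁ Y₁).add (hint X₂ Y₂)).div_const 2
  have hg : Integrable g μ := hmean.sub (hint _ _)
  have hg_nonneg : 0 ≤ g := fun x => sub_nonneg.mpr (pointCost_midpoint_le ha.le hb.le x)
  have hparallel : {x | (X₁ - x) * Y₂ = Y₁ * (X₂ - x)}.Subsingleton := by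
    intro x hx y hy
    rw [Set.mem_ofPred_eq] at hx hy
    have hxy : (x - y) * (Y₁ - Y₂) = 0 := by linear_combination hx - hy
    rcases mul_eq_zero.mp hxy with h | h
    · exact sub_eq_zero.mp h
    · refine absurd ?_ hne
      have hY : Y₁ = Y₂ := sub_eq_zero.mp h
      subst hY
      have hX : X₁ - x = X₂ - x := mul_right_cancel₀ hY₁ (by linear_combination hx)
      rw [sub_left_inj.mp hX]
  have hg_pos : ∀ᵐ x ∂μ, g x ≠ 0 := by
    filter_upwards [hparallel.countable.ae_notMem μ] with x hx
    exact (sub_pos.mpr (pointCost_midpoint_lt ha hb hx)).ne'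
  have hint_pos : 0 < ∫ x, g x ∂μ := by
    refine (integral_pos_iff_support_of_nonneg hg_nonneg hg).mpr (pos_iff_ne_zero.mpr fun h0 => ?_)
    obtain ⟨x, hx, hx0⟩ := (hg_pos.and (measure_eq_zero_iff_ae_notMem.mp h0)).exists
    exact hx0 hx
  have hint_eq : ∫ x, g x ∂μ = (expectedCost a b c μ X₁ Y₁ + expectedCost a b c μ X₂ Y₂) / 2 -
      expectedCost a b c μ ((X₁ + X₂) / 2) ((Y₁ + Y₂) / 2) := by
    simp only [g]
    rw [integral_sub hmean (hint _ _), integral_div,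
      integral_add (hint X₁ Y₁) (hint X₂ Y₂)]
    rfl
  linarith

lemma pos_of_isMinOn_expectedCost [IsProbabilityMeasure μ] [NullSingletonClass μ] (hb : 0 < b)
    (hc : 0 < c) (hμ : Integrable (fun x => x) μ) {X Y : ℝ} (hY : 0 ≤ Y)
    (hmin : IsMinOn (Function.uncurry (expectedCost a b c μ)) (Set.univ ×ˢ Set.Ici 0) (X, Y)) :
    0 < Y := by
  refine hY.lt_of_ne fun hY0 => ?_
  subst hY0
  obtain ⟨Y', hY', hlt⟩ := exists_pos_expectedCost_lt_expectedCost_zero (a := a) hb hc hμ X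
  exact (isMinOn_iff.mp hmin (X, Y') (by simp [hY'.le])).not_gt hlt

theorem eq_of_isMinOn_expectedCost [IsProbabilityMeasure μ] [NullSingletonClass μ] (ha : 0 < a)
    (hb : 0 < b) (hc : 0 < c) (hμ : Integrable (fun x => x) μ) {p q : ℝ × ℝ}
    (hp : p ∈ Set.univ ×ˢ Set.Ici 0) (hq : q ∈ Set.univ ×ˢ Set.Ici 0)
    (hp_min : IsMinOn (Function.uncurry (expectedCost a b c μ)) (Set.univ ×ˢ Set.Ici 0) p)
    (hq_min : IsMinOn (Function.uncurry (expectedCost a b c μ)) (Set.univ ×ˢ Set.Ici 0) q) :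
    p = q := by
  obtain ⟨X₁, Y₁⟩ := p
  obtain ⟨X₂, Y₂⟩ := q
  simp only [Set.mem_prod, Set.mem_univ, Set.mem_Ici, true_and] at hp hq
  by_contra hne
  have hY₁ := pos_of_isMinOn_expectedCost hb hc hμ hp hp_min
  have hmid := expectedCost_midpoint_lt (c := c) ha hb hμ hY₁.ne' hne
  have h₁ := isMinOn_iff.mp hp_min ((X₁ + X₂) / 2, (Y₁ + Y₂) / 2) (by simp; positivity)
  have h₂ := isMinOn_iff.mp hp_min (X₂, Y₂) (by simpa)
  have h₃ := isMinOn_iff.mp hq_min (X₁, Y₁) (by simpa)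
  simp only [Function.uncurry_apply_pair] at h₁ h₂ h₃
  linarith

end ExpectedCost

section Density

variable {α E : Type*} [MeasurableSpace α] [NormedAddCommGroup E] [NormedSpace ℝ E]
  {ν : Measure α} {φ : α → ℝ}

lemma integral_withDensity_ofReal (hφ : AEMeasurable φ ν) (hφ0 : 0 ≤ᵐ[ν] φ) (g : α → E) :
    ∫ x, g x ∂ν.withDensity (fun x => ENNReal.ofReal (φ x)) = ∫ x, φ x • g x ∂ν := by
  rw [integral_withDensity_eq_integral_toReal_smul₀ hφ.ennreal_ofReal
    (ae_of_all _ fun _ => ENNReal.ofReal_lt_top)]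
  refine integral_congr_ae ?_
  filter_upwards [hφ0] with x hx
  rw [ENNReal.toReal_ofReal hx]

lemma isProbabilityMeasure_withDensity_ofReal (hφ : Integrable φ ν) (hφ0 : 0 ≤ᵐ[ν] φ)
    (h1 : ∫ x, φ x ∂ν = 1) : IsProbabilityMeasure (ν.withDensity fun x => ENNReal.ofReal (φ x)) :=
  ⟨by rw [withDensity_apply _ MeasurableSet.univ, Measure.restrict_univ,
    ← ofReal_integral_eq_lintegral_ofReal hφ hφ0, h1, ENNReal.ofReal_one]⟩

end Density

theorem stmt_7_general
    (W a b c : ℝ) (φ : ℝ → ℝ)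
    (hW : 0 < W)
    (hφ0 : ∀ x, 0 ≤ φ x)
    (hφ1 : (∫ x in (0:ℝ)..W, φ x) = 1)
    (hb : 0 < b) (hc : 0 < c) (hca : c < a)
    (Cexp : ℝ → ℝ → ℝ)
    (hCexp : ∀ X Y : ℝ, Cexp X Y =
      ∫ x in (0:ℝ)..W, (a * Real.sqrt (b * (X - x) ^ 2 + Y ^ 2) - c * Y) * φ x) :
    ∀ X₁ Y₁ X₂ Y₂ : ℝ, 0 ≤ Y₁ → 0 ≤ Y₂ →
      (∀ X Y : ℝ, 0 ≤ Y → Cexp X₁ Y₁ ≤ Cexp X Y) →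
      (∀ X Y : ℝ, 0 ≤ Y → Cexp X₂ Y₂ ≤ Cexp X Y) →
      X₁ = X₂ ∧ Y₁ = Y₂ := by
  intro X₁ Y₁ X₂ Y₂ hY₁ hY₂ h₁ h₂
  set ν := volume.restrict (Set.Ioc 0 W)
  set μ := ν.withDensity fun x => ENNReal.ofReal (φ x)
  have hφ : Integrable φ ν := (intervalIntegrable_iff_integrableOn_Ioc_of_le hW.le).mp
    (intervalIntegral.intervalIntegrable_of_integral_ne_zero (hφ1 ▸ one_ne_zero))
  have hφ0' : 0 ≤ᵐ[ν] φ := ae_of_all _ hφ0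
  have : IsProbabilityMeasure μ := isProbabilityMeasure_withDensity_ofReal hφ hφ0'
    (by rwa [← intervalIntegral.integral_of_le hW.le])
  have hμ : Integrable (fun x => x) μ := by
    refine Integrable.of_bound measurable_id.aestronglyMeasurable W
      ((withDensity_absolutelyContinuous ν _).ae_le ?_)
    filter_upwards [ae_restrict_mem measurableSet_Ioc] with x hx
    exact abs_le.mpr ⟨by linarith [hx.1], hx.2⟩
  have hC : ∀ X Y, Cexp X Y = expectedCost a b c μ X Y := fun X Y => by
    rw [hCexp, intervalIntegral.integral_of_le hW.le, expectedCost,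
      integral_withDensity_ofReal hφ.aemeasurable hφ0']
    simp only [pointCost, smul_eq_mul, mul_comm (φ _)]
    rfl
  have hmin : ∀ {X Y : ℝ}, (∀ X' Y', 0 ≤ Y' → Cexp X Y ≤ Cexp X' Y') →
      IsMinOn (Function.uncurry (expectedCost a b c μ)) (Set.univ ×ˢ Set.Ici 0) (X, Y) :=
    fun h => isMinOn_iff.mpr fun ⟨X', Y'⟩ hY' => by
      simpa only [hC, Function.uncurry_apply_pair] using
        h X' Y' (Set.mem_Ici.mp (Set.mem_prod.mp hY').2)
  simpa using eq_of_isMinOn_expectedCost (hc.trans hca) hb hc hμ (by simpa) (by simpa)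
    (hmin h₁) (hmin h₂)

/-- `C_exp` has a unique global minimizer over ℝ × [0,∞). -/
theorem stmt_7
    (W M a b c : ℝ) (φ : ℝ → ℝ)
    (hW : 0 < W) (hM : 0 < M) (hφm : Measurable φ)
    (hφ0 : ∀ x, 0 ≤ φ x) (hφM : ∀ x, φ x ≤ M)
    (hφs : ∀ x, x ∉ Set.Icc (0:ℝ) W → φ x = 0)
    (hφ1 : (∫ x in (0:ℝ)..W, φ x) = 1)
    (hb : 0 < b) (hc : 0 < c) (hca : c < a)
    (Cexp : ℝ → ℝ → ℝ)
    (hCexp : ∀ X Y : ℝ, Cexp X Y =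
      ∫ x in (0:ℝ)..W, (a * Real.sqrt (b * (X - x) ^ 2 + Y ^ 2) - c * Y) * φ x) :
    ∀ X₁ Y₁ X₂ Y₂ : ℝ, 0 ≤ Y₁ → 0 ≤ Y₂ →
      (∀ X Y : ℝ, 0 ≤ Y → Cexp X₁ Y₁ ≤ Cexp X Y) →
      (∀ X Y : ℝ, 0 ≤ Y → Cexp X₂ Y₂ ≤ Cexp X Y) →
      X₁ = X₂ ∧ Y₁ = Y₂ :=
  stmt_7_general W a b c φ hW hφ0 hφ1 hb hc hca Cexp hCexp
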